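/- arXiv:1504.03602 — 2 statements merged into one kernel-verified Lean document; each statement's English description precedes it below -/
import Mathlib

section
/- Let (A,B) be a win-lose bimatrix game whose bipartite graph has minimum out-degree at least one, and let k ≥ 1. If the bipartite graph contains a cycle of length 2k, or an undominated set of k rows, or an undominated set of k columns, then the game has a (1 − 1/k)-well-supported Nash equilibrium in which the supports of both players' strategies have cardinality at most k. -/
open Finset

/-- A win-lose bimatrix game: all payoff entries are 0 or 1. -/
def IsWinLose {m n : ℕ} (A B : Matrix (Fin m) (Fin n) ℝ) : Prop :=
  ∀ i j, (A i j = 0 ∨ A i j = 1) ∧ (B i j = 0 ∨ B i j = 1)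

/-- A mixed strategy: nonnegative entries summing to 1. -/
def IsStrategy {d : ℕ} (p : Fin d → ℝ) : Prop :=
  (∀ i, 0 ≤ p i) ∧ ∑ i, p i = 1

/-- The support of a mixed strategy. -/
noncomputable def strategySupport {d : ℕ} (p : Fin d → ℝ) : Finset (Fin d) :=
  Finset.univ.filter fun i => 0 < p i

/-- (p, q) is an ε-well-supported Nash equilibrium of the game (A, B). -/
def IsWSNE {m n : ℕ} (A B : Matrix (Fin m) (Fin n) ℝ) (ε : ℝ)
    (p : Fin m → ℝ) (q : Fin n → ℝ) : Prop :=
  IsStrategy p ∧ IsStrategy q ∧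
  (∀ i, 0 < p i → ∀ i', ∑ j, A i j * q j ≥ ∑ j, A i' j * q j - ε) ∧
  (∀ j, 0 < q j → ∀ j', ∑ i, p i * B i j ≥ ∑ i, p i * B i j' - ε)

/-- The bipartite graph of the game has minimum out-degree at least one. -/
def MinOutDegOne {m n : ℕ} (A B : Matrix (Fin m) (Fin n) ℝ) : Prop :=
  (∀ i, ∃ j, A i j = 1) ∧ (∀ j, ∃ i, B i j = 1)

/-- The bipartite graph of the game contains a (directed) cycle of length `2 * s`:
distinct rows `ri 0, …, ri (s-1)` and distinct columns `cj 0, …, cj (s-1)` with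
arcs `ri t → cj t` and `cj t → ri (t+1 mod s)`. -/
def HasBipartiteCycle {m n : ℕ} (A B : Matrix (Fin m) (Fin n) ℝ) (s : ℕ) : Prop :=
  ∃ (ri : Fin s → Fin m) (cj : Fin s → Fin n),
    Function.Injective ri ∧ Function.Injective cj ∧
    (∀ t : Fin s, A (ri t) (cj t) = 1) ∧
    (∀ t : Fin s, B (ri ⟨(t.1 + 1) % s, Nat.mod_lt _ t.pos⟩) (cj t) = 1)

/-!
Both players mix uniformly, over a set `S` of rows and a set `T` of columns with at most `k`
elements each. Against the uniform strategy on `T`, a row with an arc into `T` earns at least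
`1/k` while no row earns more than `1`; and if `T` is an undominated set of exactly `k`
columns, then every row misses a column of `T` and earns at most `1 - 1/k`, while no row earns
less than `0`. In both situations every row of `S` is a `(1 - 1/k)`-best response, and
symmetrically for the columns. A `2k`-cycle provides `S` and `T` with arcs in both directions;
an undominated set of `k` rows `S` is paired with a set `T` of out-neighbours, one for each row
of `S` (it exists by the minimum out-degree), and symmetrically for undominated columns.
-/

open Matrix

section UniformStrategy

variable {κ : Type*} [DecidableEq κ]

noncomputable def uniformStrategy (T : Finset κ) : κ → ℝ :=
  fun j => if j ∈ T then (#T : ℝ)⁻¹ else 0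

lemma uniformStrategy_pos_iff {T : Finset κ} {j : κ} : 0 < uniformStrategy T j ↔ j ∈ T := by
  by_cases hj : j ∈ T
  · simpa [uniformStrategy, hj] using card_pos.2 ⟨j, hj⟩
  · simp [uniformStrategy, hj]

lemma strategySupport_uniformStrategy {d : ℕ} (S : Finset (Fin d)) :
    strategySupport (uniformStrategy S) = S := by
  ext i
  simp [strategySupport, uniformStrategy_pos_iff]

lemma isStrategy_uniformStrategy {d : ℕ} {S : Finset (Fin d)} (hS : S.Nonempty) :
    IsStrategy (uniformStrategy S) := by
  refine ⟨fun i => ?_, ?_⟩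
  · unfold uniformStrategy
    split <;> positivity
  · have hcard : (#S : ℝ) ≠ 0 := by exact_mod_cast hS.card_ne_zero
    simp [uniformStrategy, sum_ite_mem, hcard]

variable [Fintype κ]

lemma dotProduct_uniformStrategy (a : κ → ℝ) (T : Finset κ) :
    a ⬝ᵥ uniformStrategy T = (∑ j ∈ T, a j) / #T := by
  simp [dotProduct, uniformStrategy, sum_mul, div_eq_mul_inv]

lemma dotProduct_uniformStrategy_nonneg {a : κ → ℝ} (ha : ∀ j, 0 ≤ a j) (T : Finset κ) :
    0 ≤ a ⬝ᵥ uniformStrategy T := by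
  rw [dotProduct_uniformStrategy]
  exact div_nonneg (sum_nonneg fun j _ => ha j) (Nat.cast_nonneg _)

lemma dotProduct_uniformStrategy_le_one {a : κ → ℝ} (ha : ∀ j, a j ≤ 1) (T : Finset κ) :
    a ⬝ᵥ uniformStrategy T ≤ 1 := by
  rw [dotProduct_uniformStrategy]
  refine div_le_one_of_le₀ ?_ (Nat.cast_nonneg _)
  simpa using sum_le_sum fun j (_ : j ∈ T) => ha j

lemma inv_card_le_dotProduct_uniformStrategy {a : κ → ℝ} (ha : ∀ j, 0 ≤ a j) {T : Finset κ}
    {j : κ} (hj : j ∈ T) (haj : a j = 1) :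
    (#T : ℝ)⁻¹ ≤ a ⬝ᵥ uniformStrategy T := by
  rw [dotProduct_uniformStrategy, inv_eq_one_div]
  gcongr
  exact haj ▸ single_le_sum (fun j _ => ha j) hj

lemma dotProduct_uniformStrategy_le_one_sub_inv_card {a : κ → ℝ} (ha : ∀ j, a j ≤ 1)
    {T : Finset κ} {j : κ} (hj : j ∈ T) (haj : a j = 0) :
    a ⬝ᵥ uniformStrategy T ≤ 1 - (#T : ℝ)⁻¹ := by
  have hcard : (0 : ℝ) < #T := by exact_mod_cast card_pos.2 ⟨j, hj⟩
  have hsum : ∑ i ∈ T, a i ≤ #T - 1 := by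
    rw [← add_sum_erase T a hj, haj, zero_add]
    calc ∑ i ∈ T.erase j, a i ≤ #(T.erase j) := by simpa using sum_le_sum fun i _ => ha i
      _ = #T - 1 := by rw [card_erase_of_mem hj, Nat.cast_pred (card_pos.2 ⟨j, hj⟩)]
  rw [dotProduct_uniformStrategy, div_le_iff₀ hcard, sub_mul, inv_mul_cancel₀ hcard.ne']
  linarith

end UniformStrategy

section BestResponse

variable {ι κ : Type*} [Fintype κ] [DecidableEq κ]

def IsEpsBestResponseOn (M : Matrix ι κ ℝ) (ε : ℝ) (v : κ → ℝ) (S : Finset ι) : Prop :=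
  ∀ i ∈ S, ∀ i', (M *ᵥ v) i' - ε ≤ (M *ᵥ v) i

variable {M : Matrix ι κ ℝ} {k : ℕ}

lemma isEpsBestResponseOn_of_forall_exists_eq_one (hM : ∀ i j, M i j = 0 ∨ M i j = 1)
    {S : Finset ι} {T : Finset κ} (hTk : #T ≤ k) (hST : ∀ i ∈ S, ∃ j ∈ T, M i j = 1) :
    IsEpsBestResponseOn M (1 - 1 / k) (uniformStrategy T) S := by
  have hM0 i j : 0 ≤ M i j := by rcases hM i j with h | h <;> simp [h]
  have hM1 i j : M i j ≤ 1 := by rcases hM i j with h | h <;> simp [h]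
  intro i hi i'
  obtain ⟨j, hj, hij⟩ := hST i hi
  have hk : (1 : ℝ) / k ≤ (#T : ℝ)⁻¹ := by
    rw [one_div]
    gcongr
    exact_mod_cast card_pos.2 ⟨j, hj⟩
  have hlow := inv_card_le_dotProduct_uniformStrategy (hM0 i) hj hij
  have hup := dotProduct_uniformStrategy_le_one (hM1 i') T
  simp only [mulVec] at hlow hup ⊢
  linarith

lemma isEpsBestResponseOn_of_card_eq_of_forall_exists_ne_one
    (hM : ∀ i j, M i j = 0 ∨ M i j = 1) {T : Finset κ} (hTk : #T = k)
    (hT : ∀ i, ∃ j ∈ T, M i j ≠ 1) (S : Finset ι) :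
    IsEpsBestResponseOn M (1 - 1 / k) (uniformStrategy T) S := by
  have hM0 i j : 0 ≤ M i j := by rcases hM i j with h | h <;> simp [h]
  have hM1 i j : M i j ≤ 1 := by rcases hM i j with h | h <;> simp [h]
  intro i _ i'
  obtain ⟨j, hj, hij⟩ := hT i'
  have hup := dotProduct_uniformStrategy_le_one_sub_inv_card (hM1 i') hj
    ((hM i' j).resolve_right hij)
  have hlow := dotProduct_uniformStrategy_nonneg (hM0 i) T
  rw [hTk, ← one_div] at hup
  simp only [mulVec] at hlow hup ⊢
  linarith

end BestResponse

section Game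

variable {m n k : ℕ} {A B : Matrix (Fin m) (Fin n) ℝ} {ε : ℝ}

def HasSmallSupportWSNE (A B : Matrix (Fin m) (Fin n) ℝ) (ε : ℝ) (k : ℕ) : Prop :=
  ∃ (p : Fin m → ℝ) (q : Fin n → ℝ),
    IsWSNE A B ε p q ∧ #(strategySupport p) ≤ k ∧ #(strategySupport q) ≤ k

lemma isWSNE_uniformStrategy {S : Finset (Fin m)} {T : Finset (Fin n)} (hS : S.Nonempty)
    (hT : T.Nonempty) (hrow : IsEpsBestResponseOn A ε (uniformStrategy T) S)
    (hcol : IsEpsBestResponseOn Bᵀ ε (uniformStrategy S) T) :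
    IsWSNE A B ε (uniformStrategy S) (uniformStrategy T) := by
  refine ⟨isStrategy_uniformStrategy hS, isStrategy_uniformStrategy hT,
    fun i hi i' => hrow i (uniformStrategy_pos_iff.1 hi) i', fun j hj j' => ?_⟩
  have h := hcol j (uniformStrategy_pos_iff.1 hj) j'
  rwa [mulVec_transpose] at h

lemma hasSmallSupportWSNE_of_uniformStrategy {S : Finset (Fin m)} {T : Finset (Fin n)}
    (hS : S.Nonempty) (hT : T.Nonempty) (hSk : #S ≤ k) (hTk : #T ≤ k)
    (hrow : IsEpsBestResponseOn A ε (uniformStrategy T) S)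
    (hcol : IsEpsBestResponseOn Bᵀ ε (uniformStrategy S) T) :
    HasSmallSupportWSNE A B ε k :=
  ⟨_, _, isWSNE_uniformStrategy hS hT hrow hcol, by rwa [strategySupport_uniformStrategy],
    by rwa [strategySupport_uniformStrategy]⟩

lemma hasSmallSupportWSNE_of_hasBipartiteCycle (hWL : IsWinLose A B) (hk : 1 ≤ k)
    (hcyc : HasBipartiteCycle A B k) :
    HasSmallSupportWSNE A B (1 - 1 / k) k := by
  obtain ⟨ri, cj, -, -, hA, hB⟩ := hcyc
  have : Nonempty (Fin k) := ⟨⟨0, hk⟩⟩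
  have hSk : #(univ.image ri) ≤ k := card_image_le.trans_eq (card_fin k)
  have hTk : #(univ.image cj) ≤ k := card_image_le.trans_eq (card_fin k)
  refine hasSmallSupportWSNE_of_uniformStrategy (univ_nonempty.image ri)
    (univ_nonempty.image cj) hSk hTk
    (isEpsBestResponseOn_of_forall_exists_eq_one (fun i j => (hWL i j).1) hTk ?_)
    (isEpsBestResponseOn_of_forall_exists_eq_one (fun j i => (hWL i j).2) hSk ?_)
  · intro i hi
    obtain ⟨t, -, rfl⟩ := mem_image.1 hi
    exact ⟨cj t, mem_image_of_mem cj (mem_univ t), hA t⟩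
  · intro j hj
    obtain ⟨t, -, rfl⟩ := mem_image.1 hj
    exact ⟨ri _, mem_image_of_mem ri (mem_univ _), hB t⟩

lemma hasSmallSupportWSNE_of_undominated_rows (hWL : IsWinLose A B) (hk : 1 ≤ k)
    (hA : ∀ i, ∃ j, A i j = 1) {S : Finset (Fin m)} (hSk : #S = k)
    (hS : ∀ j, ∃ i ∈ S, B i j ≠ 1) :
    HasSmallSupportWSNE A B (1 - 1 / k) k := by
  have hSne : S.Nonempty := card_pos.1 (hSk ▸ hk)
  choose f hf using hA
  have hTk : #(S.image f) ≤ k := card_image_le.trans_eq hSk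
  exact hasSmallSupportWSNE_of_uniformStrategy hSne (hSne.image f) hSk.le hTk
    (isEpsBestResponseOn_of_forall_exists_eq_one (fun i j => (hWL i j).1) hTk
      fun i hi => ⟨f i, mem_image_of_mem f hi, hf i⟩)
    (isEpsBestResponseOn_of_card_eq_of_forall_exists_ne_one (fun j i => (hWL i j).2) hSk hS _)

lemma hasSmallSupportWSNE_of_undominated_cols (hWL : IsWinLose A B) (hk : 1 ≤ k)
    (hB : ∀ j, ∃ i, B i j = 1) {T : Finset (Fin n)} (hTk : #T = k)
    (hT : ∀ i, ∃ j ∈ T, A i j ≠ 1) :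
    HasSmallSupportWSNE A B (1 - 1 / k) k := by
  have hTne : T.Nonempty := card_pos.1 (hTk ▸ hk)
  choose g hg using hB
  have hSk : #(T.image g) ≤ k := card_image_le.trans_eq hTk
  exact hasSmallSupportWSNE_of_uniformStrategy (hTne.image g) hTne hSk hTk.le
    (isEpsBestResponseOn_of_card_eq_of_forall_exists_ne_one (fun i j => (hWL i j).1) hTk hT _)
    (isEpsBestResponseOn_of_forall_exists_eq_one (fun j i => (hWL i j).2) hSk
      fun j hj => ⟨g j, mem_image_of_mem g hj, hg j⟩)

end Game

/-- Corollary 1 (cycle of length 2k or undominated set of size k ⇒ small-support WSNE). -/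
theorem cycle_or_undominated_gives_WSNE {m n k : ℕ} (hk : 1 ≤ k)
    (A B : Matrix (Fin m) (Fin n) ℝ)
    (hWL : IsWinLose A B) (hdeg : MinOutDegOne A B)
    (hyp : HasBipartiteCycle A B k ∨
           (∃ S : Finset (Fin m), S.card = k ∧ ¬ ∃ j, ∀ i ∈ S, B i j = 1) ∨
           (∃ T : Finset (Fin n), T.card = k ∧ ¬ ∃ i, ∀ j ∈ T, A i j = 1)) :
    ∃ (p : Fin m → ℝ) (q : Fin n → ℝ),
      IsWSNE A B (1 - 1 / (k : ℝ)) p q ∧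
      (strategySupport p).card ≤ k ∧ (strategySupport q).card ≤ k := by
  rcases hyp with hcyc | ⟨S, hSk, hS⟩ | ⟨T, hTk, hT⟩
  · exact hasSmallSupportWSNE_of_hasBipartiteCycle hWL hk hcyc
  · exact hasSmallSupportWSNE_of_undominated_rows hWL hk hdeg.1 hSk (by simpa using hS)
  · exact hasSmallSupportWSNE_of_undominated_cols hWL hk hdeg.2 hTk (by simpa using hT)
end

section
/- Let (A,B) be a win-lose bimatrix game whose bipartite graph has minimum out-degree at least one, let k ≥ 1, and let 0 ≤ ε < 1. If the game has an ε-well-supported Nash equilibrium in which the supports of both players' strategies have cardinality at most k, then the bipartite graph of the game contains an undominated set of k rows, or an undominated set of k columns, or a cycle of length 2s for some s with 1 ≤ s ≤ k. -/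
open Finset

/-!
Take a set of rows `S` and a set of columns `T` such that every row of `S` beats a column of
`T` and every column of `T` beats a row of `S`. Iterating "row ↦ a column of `T` it beats ↦ a row
of `S` beating that column" eventually reaches a periodic point, and its periodic orbit is a cycle
of the bipartite graph with at most `|S|` rows and at most `|T|` columns.

If `k` exceeds `m` or `n`, minimum out-degree one lets us take all rows and all columns.
Otherwise, if either support of the equilibrium is undominated it extends to an undominated set
of size `k`. If both are dominated, the dominating row earns payoff `1` against `q`, so since
`ε < 1` every row in the support of `p` earns a positive payoff, i.e. beats some column in the
support of `q`; symmetrically for columns. The two supports are then closed under the map and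
give a cycle of length at most `2k`.
-/

open Function Set

namespace Function

variable {α β : Type*}

theorem exists_iterate_mem_periodicPts [Finite α] (f : α → α) (x : α) :
    ∃ n, f^[n] x ∈ periodicPts f := by
  obtain ⟨a, b, heq, hne⟩ : ∃ a b, f^[a] x = f^[b] x ∧ a ≠ b := by
    simpa [Injective] using not_injective_infinite_finite (f^[·] x)
  wlog hab : a < b generalizing a b
  · exact this b a heq.symm hne.symm (by omega)
  refine ⟨a, mk_mem_periodicPts (Nat.sub_pos_of_lt hab) ?_⟩
  rw [IsPeriodicPt, IsFixedPt, ← iterate_add_apply, Nat.sub_add_cancel hab.le, heq]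

theorem minimalPeriod_le_card_of_mapsTo {f : α → α} {s : Finset α}
    (hf : MapsTo f s s) {x : α} (hx : x ∈ s) : minimalPeriod f x ≤ s.card := by
  simpa using Finset.card_le_card_of_injOn (f^[·] x) (s := Finset.range (minimalPeriod f x))
    (fun n _ => hf.iterate n hx) (by simpa using iterate_injOn_Iio_minimalPeriod)

theorem minimalPeriod_comp_apply (f : α → β) (g : β → α) {x : α}
    (hx : x ∈ periodicPts (g ∘ f)) : minimalPeriod (f ∘ g) (f x) = minimalPeriod (g ∘ f) x := by
  have hpos := minimalPeriod_pos_of_mem_periodicPts hx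
  have hfx : IsPeriodicPt (f ∘ g) (minimalPeriod (g ∘ f) x) (f x) :=
    (isPeriodicPt_minimalPeriod _ x).map fun _ => rfl
  have hfx_pos := minimalPeriod_pos_of_mem_periodicPts (mk_mem_periodicPts hpos hfx)
  have hgfx : IsPeriodicPt (g ∘ f) (minimalPeriod (f ∘ g) (f x)) (g (f x)) :=
    (isPeriodicPt_minimalPeriod (f ∘ g) (f x)).map (g := g) fun _ => rfl
  refine (hfx.minimalPeriod_le hpos).antisymm ?_
  rw [← minimalPeriod_apply hx]
  exact hgfx.minimalPeriod_le hfx_pos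

end Function

section Cycle

variable {m n : ℕ} {A B : Matrix (Fin m) (Fin n) ℝ} {S : Finset (Fin m)} {T : Finset (Fin n)}

theorem hasBipartiteCycle_minimalPeriod {f : Fin m → Fin n} {g : Fin n → Fin m}
    (hf : MapsTo f S T) (hg : MapsTo g T S) (hA : ∀ i ∈ S, A i (f i) = 1)
    (hB : ∀ j ∈ T, B (g j) j = 1) {x : Fin m} (hxS : x ∈ S) (hx : x ∈ periodicPts (g ∘ f)) :
    HasBipartiteCycle A B (minimalPeriod (g ∘ f) x) := by
  have horbit : ∀ t, (g ∘ f)^[t] x ∈ S := fun t => (hg.comp hf).iterate t hxS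
  have hcol : ∀ t, f ((g ∘ f)^[t] x) = (f ∘ g)^[t] (f x) :=
    fun t => Semiconj.iterate_right (f := f) (ga := g ∘ f) (gb := f ∘ g) (fun _ => rfl) t x
  have hcol_inj := iterate_injOn_Iio_minimalPeriod (f := f ∘ g) (x := f x)
  rw [minimalPeriod_comp_apply f g hx] at hcol_inj
  refine ⟨fun t => (g ∘ f)^[t] x, fun t => f ((g ∘ f)^[t] x),
    fun t t' h => Fin.ext (iterate_injOn_Iio_minimalPeriod t.2 t'.2 h),
    fun t t' h => Fin.ext (hcol_inj t.2 t'.2 (by simpa only [hcol] using h)),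
    fun t => hA _ (horbit t), fun t => ?_⟩
  show B ((g ∘ f)^[(t.1 + 1) % _] x) _ = 1
  rw [iterate_mod_minimalPeriod_eq, iterate_succ_apply']
  exact hB _ (hf (horbit t))

theorem exists_hasBipartiteCycle (hS : S.Nonempty) (hST : ∀ i ∈ S, ∃ j ∈ T, A i j = 1)
    (hTS : ∀ j ∈ T, ∃ i ∈ S, B i j = 1) :
    ∃ s, 1 ≤ s ∧ s ≤ S.card ∧ s ≤ T.card ∧ HasBipartiteCycle A B s := by
  obtain ⟨x, hx⟩ := hS
  have : Nonempty (Fin m) := ⟨x⟩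
  have : Nonempty (Fin n) := ⟨(hST x hx).choose⟩
  choose! f hf hA using hST
  choose! g hg hB using hTS
  obtain ⟨t, ht⟩ := exists_iterate_mem_periodicPts (g ∘ f) x
  have hyS := (MapsTo.comp hg hf).iterate t hx
  refine ⟨_, minimalPeriod_pos_of_mem_periodicPts ht,
    minimalPeriod_le_card_of_mapsTo (MapsTo.comp hg hf) hyS, ?_,
    hasBipartiteCycle_minimalPeriod hf hg hA hB hyS ht⟩
  rw [← minimalPeriod_comp_apply f g ht]
  exact minimalPeriod_le_card_of_mapsTo (MapsTo.comp hf hg) (hf _ hyS)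

end Cycle

section Strategy

variable {d : ℕ} {q a : Fin d → ℝ}

theorem mem_strategySupport {i : Fin d} : i ∈ strategySupport q ↔ 0 < q i := by
  simp [strategySupport]

theorem IsStrategy.support_nonempty (hq : IsStrategy q) : (strategySupport q).Nonempty := by
  obtain ⟨i, -, hi⟩ := Finset.exists_lt_of_sum_lt (s := Finset.univ) (f := 0) (g := q)
    (by simp [hq.2])
  exact ⟨i, mem_strategySupport.2 hi⟩

theorem IsStrategy.dotProduct_eq_one_of_eqOn_support (hq : IsStrategy q)
    (ha : ∀ j ∈ strategySupport q, a j = 1) : a ⬝ᵥ q = 1 := by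
  rw [← hq.2]
  refine Finset.sum_congr rfl fun j _ => ?_
  rcases (hq.1 j).lt_or_eq with hj | hj
  · rw [ha j (mem_strategySupport.2 hj), one_mul]
  · rw [← hj, mul_zero]

theorem IsStrategy.exists_mem_support_eq_one_of_dotProduct_pos (hq : IsStrategy q)
    (ha : ∀ j, a j = 0 ∨ a j = 1) (hpos : 0 < a ⬝ᵥ q) : ∃ j ∈ strategySupport q, a j = 1 := by
  obtain ⟨j, -, hj⟩ := Finset.exists_ne_zero_of_sum_ne_zero hpos.ne'
  obtain ⟨ha0, hq0⟩ := mul_ne_zero_iff.1 hj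
  exact ⟨j, mem_strategySupport.2 ((hq.1 j).lt_of_ne' hq0), (ha j).resolve_left ha0⟩

end Strategy

section WSNE

variable {m n : ℕ} {A B : Matrix (Fin m) (Fin n) ℝ} {ε : ℝ} {p : Fin m → ℝ} {q : Fin n → ℝ}

theorem IsWSNE.forall_mem_support_exists_A_eq_one (h : IsWSNE A B ε p q)
    (hWL : IsWinLose A B) (hε : ε < 1) (hdom : ∃ i₀, ∀ j ∈ strategySupport q, A i₀ j = 1) :
    ∀ i ∈ strategySupport p, ∃ j ∈ strategySupport q, A i j = 1 := by
  obtain ⟨i₀, hi₀⟩ := hdom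
  intro i hi
  have hpay : A i₀ ⬝ᵥ q - ε ≤ A i ⬝ᵥ q := h.2.2.1 i (mem_strategySupport.1 hi) i₀
  rw [h.2.1.dotProduct_eq_one_of_eqOn_support hi₀] at hpay
  exact h.2.1.exists_mem_support_eq_one_of_dotProduct_pos (fun j => (hWL i j).1) (by linarith)

theorem IsWSNE.forall_mem_support_exists_B_eq_one (h : IsWSNE A B ε p q)
    (hWL : IsWinLose A B) (hε : ε < 1) (hdom : ∃ j₀, ∀ i ∈ strategySupport p, B i j₀ = 1) :
    ∀ j ∈ strategySupport q, ∃ i ∈ strategySupport p, B i j = 1 := by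
  obtain ⟨j₀, hj₀⟩ := hdom
  intro j hj
  have hpay : p ⬝ᵥ (B · j₀) - ε ≤ p ⬝ᵥ (B · j) := h.2.2.2 j (mem_strategySupport.1 hj) j₀
  rw [dotProduct_comm, dotProduct_comm p, h.1.dotProduct_eq_one_of_eqOn_support hj₀] at hpay
  exact h.1.exists_mem_support_eq_one_of_dotProduct_pos (fun i => (hWL i j).2) (by linarith)

end WSNE

theorem exists_card_eq_not_exists_forall {ι κ : Type*} [Fintype ι] {R : ι → κ → Prop}
    {S : Finset ι} {k : ℕ} (hS : ¬ ∃ j, ∀ i ∈ S, R i j) (hSk : S.card ≤ k)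
    (hk : k ≤ Fintype.card ι) : ∃ S' : Finset ι, S'.card = k ∧ ¬ ∃ j, ∀ i ∈ S', R i j := by
  obtain ⟨S', hSS', -, hS'⟩ := Finset.exists_subsuperset_card_eq (Finset.subset_univ S) hSk hk
  exact ⟨S', hS', fun ⟨j, hj⟩ => hS ⟨j, fun i hi => hj i (hSS' hi)⟩⟩

theorem WSNE_gives_cycle_or_undominated_general {m n k : ℕ} (ε : ℝ)
    (hε1 : ε < 1)
    (A B : Matrix (Fin m) (Fin n) ℝ)
    (hWL : IsWinLose A B) (hdeg : MinOutDegOne A B)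
    (hWSNE : ∃ (p : Fin m → ℝ) (q : Fin n → ℝ),
      IsWSNE A B ε p q ∧
      (strategySupport p).card ≤ k ∧ (strategySupport q).card ≤ k) :
    (∃ S : Finset (Fin m), S.card = k ∧ ¬ ∃ j, ∀ i ∈ S, B i j = 1) ∨
    (∃ T : Finset (Fin n), T.card = k ∧ ¬ ∃ i, ∀ j ∈ T, A i j = 1) ∨
    (∃ s, 1 ≤ s ∧ s ≤ k ∧ HasBipartiteCycle A B s) := by
  obtain ⟨p, q, hpq, hpk, hqk⟩ := hWSNE
  have hP := hpq.1.support_nonempty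
  by_cases hsmall : m < k ∨ n < k
  · obtain ⟨s, hs, hsm, hsn, hcyc⟩ :=
      exists_hasBipartiteCycle (S := Finset.univ) (T := Finset.univ)
        (hP.mono (Finset.subset_univ _)) (fun i _ => by simpa using hdeg.1 i)
        (fun j _ => by simpa using hdeg.2 j)
    simp only [Finset.card_univ, Fintype.card_fin] at hsm hsn
    exact .inr (.inr ⟨s, hs, by omega, hcyc⟩)
  simp only [not_or, not_lt] at hsmall
  by_cases hPdom : ∃ j, ∀ i ∈ strategySupport p, B i j = 1
  swap
  · exact .inl (exists_card_eq_not_exists_forall hPdom hpk (by simpa using hsmall.1))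
  by_cases hQdom : ∃ i, ∀ j ∈ strategySupport q, A i j = 1
  swap
  · exact .inr (.inl (exists_card_eq_not_exists_forall (R := fun j i => A i j = 1) hQdom hqk
      (by simpa using hsmall.2)))
  obtain ⟨s, hs, hsP, -, hcyc⟩ := exists_hasBipartiteCycle hP
    (hpq.forall_mem_support_exists_A_eq_one hWL hε1 hQdom)
    (hpq.forall_mem_support_exists_B_eq_one hWL hε1 hPdom)
  exact .inr (.inr ⟨s, hs, hsP.trans hpk, hcyc⟩)

/-- Lemma 4 (small-support ε-WSNE ⇒ undominated set of size k or a short cycle). -/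
theorem WSNE_gives_cycle_or_undominated {m n k : ℕ} (hk : 1 ≤ k) (ε : ℝ)
    (hε0 : 0 ≤ ε) (hε1 : ε < 1)
    (A B : Matrix (Fin m) (Fin n) ℝ)
    (hWL : IsWinLose A B) (hdeg : MinOutDegOne A B)
    (hWSNE : ∃ (p : Fin m → ℝ) (q : Fin n → ℝ),
      IsWSNE A B ε p q ∧
      (strategySupport p).card ≤ k ∧ (strategySupport q).card ≤ k) :
    (∃ S : Finset (Fin m), S.card = k ∧ ¬ ∃ j, ∀ i ∈ S, B i j = 1) ∨
    (∃ T : Finset (Fin n), T.card = k ∧ ¬ ∃ i, ∀ j ∈ T, A i j = 1) ∨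
    (∃ s, 1 ≤ s ∧ s ≤ k ∧ HasBipartiteCycle A B s) :=
  WSNE_gives_cycle_or_undominated_general ε hε1 A B hWL hdeg hWSNE
end
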